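/- For k = 1 on a 2×2 macroelement M, the kernel N_M = {v ∈ V₁(M) : (div τ, v)_{L²(Ω_M)} = 0 for all τ ∈ Σ_{1,0}(M)} equals span{(1,0)ᵀ, (0,1)ᵀ, ε_{y,-x}}, where ε_{y,-x} is the piecewise constant field equal to (-1,1)ᵀ on K₁, (-1,-1)ᵀ on K₂, (1,-1)ᵀ on K₃, and (1,1)ᵀ on K₄. -/

import Mathlib

open intervalIntegral MvPolynomial

/-- Evaluation of a bivariate polynomial (variable `0` is `x`, variable `1` is `y`). -/
noncomputable def ev2 (p : MvPolynomial (Fin 2) ℝ) (x y : ℝ) : ℝ :=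
  MvPolynomial.eval ![x, y] p

/-- Membership in `P_k \ span{y^k}`. -/
def memPkNoYk (k : ℕ) (p : MvPolynomial (Fin 2) ℝ) : Prop :=
  p.totalDegree ≤ k ∧ MvPolynomial.coeff (Finsupp.single 1 k) p = 0

/-- Membership in `P_k \ span{x^k}`. -/
def memPkNoXk (k : ℕ) (p : MvPolynomial (Fin 2) ℝ) : Prop :=
  p.totalDegree ≤ k ∧ MvPolynomial.coeff (Finsupp.single 0 k) p = 0

/-- First component of the enriched BDFM space. -/
def memH1 (k : ℕ) (q : MvPolynomial (Fin 2) ℝ) : Prop :=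
  ∃ p : MvPolynomial (Fin 2) ℝ, ∃ a b : ℝ, memPkNoYk k p ∧
    q = p + MvPolynomial.C a * X 0 ^ (k + 1) + MvPolynomial.C b * X 0 ^ 2 * X 1 ^ (k - 1)

/-- Second component of the enriched BDFM space. -/
def memH2 (k : ℕ) (q : MvPolynomial (Fin 2) ℝ) : Prop :=
  ∃ p : MvPolynomial (Fin 2) ℝ, ∃ a b : ℝ, memPkNoXk k p ∧
    q = p + MvPolynomial.C a * X 1 ^ (k + 1) + MvPolynomial.C b * X 1 ^ 2 * X 0 ^ (k - 1)

/-- The serendipity space of order `k`: `S_k = P_k + span{x^k y, x y^k}`. -/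
def memS (k : ℕ) (q : MvPolynomial (Fin 2) ℝ) : Prop :=
  ∃ p : MvPolynomial (Fin 2) ℝ, ∃ a b : ℝ, p.totalDegree ≤ k ∧
    q = p + MvPolynomial.C a * X 0 ^ k * X 1 + MvPolynomial.C b * X 0 * X 1 ^ k

/-- Local displacement space
`V_k(K) = (P_{k-1})² ⊕ span{(x^k,0),(0,y^k),(xy^{k-1},0),(0,x^{k-1}y)}`. -/
def memVk (k : ℕ) (q1 q2 : MvPolynomial (Fin 2) ℝ) : Prop :=
  ∃ p1 p2 : MvPolynomial (Fin 2) ℝ, ∃ a b c d : ℝ,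
    p1.totalDegree ≤ k - 1 ∧ p2.totalDegree ≤ k - 1 ∧
    q1 = p1 + MvPolynomial.C a * X 0 ^ k + MvPolynomial.C b * X 0 * X 1 ^ (k - 1) ∧
    q2 = p2 + MvPolynomial.C c * X 1 ^ k + MvPolynomial.C d * X 0 ^ (k - 1) * X 1

/-- Partial derivative in the first variable. -/
noncomputable def Dx (f : ℝ → ℝ → ℝ) (x y : ℝ) : ℝ := deriv (fun t => f t y) x

/-- Partial derivative in the second variable. -/
noncomputable def Dy (f : ℝ → ℝ → ℝ) (x y : ℝ) : ℝ := deriv (fun t => f x t) y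

/-- The `i`-th open subinterval (`i = 0, 1`) of `(-h, h)` in the 2×2 macroelement of squares
of side `h`. -/
def IxM (h : ℝ) (i : Fin 2) : Set ℝ := Set.Ioo (((i : ℕ) : ℝ) * h - h) (((i : ℕ) : ℝ) * h)

/-- The macroelement stress space `Σ_{k,0}(M)` on the macroelement
`Ω_M = (-h,h)²` of four squares of side `h`: elementwise enriched-BDFM normal stress and
serendipity shear stress, `H(div)`-conformity, and vanishing normal trace `τν = 0` on
`∂Ω_M`. -/
def macroSigma0 (k : ℕ) (h : ℝ) (t11 t12 t22 : ℝ → ℝ → ℝ) : Prop :=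
  (∀ i j : Fin 2, ∃ q1 q2 q12 : MvPolynomial (Fin 2) ℝ,
    memH1 k q1 ∧ memH2 k q2 ∧ memS k q12 ∧
    ∀ x ∈ IxM h i, ∀ y ∈ IxM h j,
      t11 x y = ev2 q1 x y ∧ t22 x y = ev2 q2 x y ∧ t12 x y = ev2 q12 x y) ∧
  (∀ y ∈ Set.Ioo (-h) h, y ≠ 0 → ContinuousOn (fun x => t11 x y) (Set.Icc (-h) h)) ∧
  (∀ x ∈ Set.Ioo (-h) h, x ≠ 0 → ContinuousOn (fun y => t22 x y) (Set.Icc (-h) h)) ∧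
  ContinuousOn (fun z : ℝ × ℝ => t12 z.1 z.2) (Set.Icc (-h) h ×ˢ Set.Icc (-h) h) ∧
  (∀ y ∈ Set.Ioo (-h) h, y ≠ 0 → t11 (-h) y = 0 ∧ t11 h y = 0) ∧
  (∀ x ∈ Set.Ioo (-h) h, x ≠ 0 → t22 x (-h) = 0 ∧ t22 x h = 0) ∧
  (∀ z ∈ frontier (Set.Ioo (-h) h ×ˢ Set.Ioo (-h) h), t12 z.1 z.2 = 0)

/-- The macroelement displacement space `V_k(M)`. -/
def macroVk (k : ℕ) (h : ℝ) (v1 v2 : ℝ → ℝ → ℝ) : Prop :=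
  ∀ i j : Fin 2, ∃ q1 q2 : MvPolynomial (Fin 2) ℝ, memVk k q1 q2 ∧
    ∀ x ∈ IxM h i, ∀ y ∈ IxM h j, v1 x y = ev2 q1 x y ∧ v2 x y = ev2 q2 x y

/-- Sum over the four elements of the macroelement of the elementwise iterated integrals. -/
noncomputable def iiM (h : ℝ) (f : ℝ → ℝ → ℝ) : ℝ :=
  ∑ i : Fin 2, ∑ j : Fin 2,
    ∫ x in (((i : ℕ) : ℝ) * h - h)..(((i : ℕ) : ℝ) * h),
      ∫ y in (((j : ℕ) : ℝ) * h - h)..(((j : ℕ) : ℝ) * h), f x y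

/-- `v` is `L²(Ω_M)`-orthogonal to the rigid motions `RM = span{(1,0),(0,1),(y,-x)}`. -/
def rmPerp (h : ℝ) (v1 v2 : ℝ → ℝ → ℝ) : Prop :=
  iiM h (fun x y => v1 x y) = 0 ∧ iiM h (fun x y => v2 x y) = 0 ∧
    iiM h (fun x y => y * v1 x y - x * v2 x y) = 0

/-- Sign pattern of the piecewise-constant surrogate `ε_{y,-x}` of the rotation `(y,-x)`:
its first component is `-1` on the two lower squares and `1` on the two upper squares. -/
def eps1 (j : Fin 2) : ℝ := if j = 0 then -1 else 1

/-- Second component of `ε_{y,-x}`: `1` on the two left squares and `-1` on the two right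
squares. -/
def eps2 (i : Fin 2) : ℝ := if i = 0 then 1 else -1

/-!
Testing against stresses supported on a single row of cells, `τ₁₁ = φ(x)` with `φ` one of the
two quadratic bubbles or the tent `h - |x|`, turns the kernel condition into a one-dimensional
one: the bubbles force `v₁` to have no slope and the tent forces it to take the same value on
both cells of the row. Columns and `τ₂₂` treat `v₂` in the same way, and the shear stress
`(h - |x|)(h - |y|)` finally couples the jump of `v₁` across `y = 0` to that of `v₂` across
`x = 0`, which leaves exactly three parameters. Conversely, for such `v` the cell integrals of
`∂ₓτ₁₁` and `∂ᵧτ₂₂` telescope along each row and column to the vanishing boundary values, while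
the shear terms only see `τ₁₂(0, 0)`, with signs that cancel against `ε_{y,-x}`.
-/

open Set
open MeasureTheory (volume)

def cellLo (h : ℝ) (i : Fin 2) : ℝ := ((i : ℕ) : ℝ) * h - h

def cellHi (h : ℝ) (i : Fin 2) : ℝ := ((i : ℕ) : ℝ) * h

@[simp] lemma cellLo_zero (h : ℝ) : cellLo h 0 = -h := by simp [cellLo]

@[simp] lemma cellLo_one (h : ℝ) : cellLo h 1 = 0 := by simp [cellLo]

@[simp] lemma cellHi_zero (h : ℝ) : cellHi h 0 = 0 := by simp [cellHi]

@[simp] lemma cellHi_one (h : ℝ) : cellHi h 1 = h := by simp [cellHi]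

@[simp] lemma eps1_zero : eps1 0 = -1 := rfl

@[simp] lemma eps1_one : eps1 1 = 1 := rfl

@[simp] lemma eps2_zero : eps2 0 = 1 := rfl

@[simp] lemma eps2_one : eps2 1 = -1 := rfl

lemma IxM_eq_Ioo (h : ℝ) (i : Fin 2) : IxM h i = Ioo (cellLo h i) (cellHi h i) := rfl

lemma cellHi_sub_cellLo (h : ℝ) (i : Fin 2) : cellHi h i - cellLo h i = h := by
  simp [cellLo, cellHi]

lemma cellLo_le_cellHi {h : ℝ} (hh : 0 ≤ h) (i : Fin 2) : cellLo h i ≤ cellHi h i := by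
  linarith [cellHi_sub_cellLo h i]

lemma Icc_cell_subset {h : ℝ} (hh : 0 ≤ h) (i : Fin 2) :
    Icc (cellLo h i) (cellHi h i) ⊆ Icc (-h) h := by
  fin_cases i <;> simp [Icc_subset_Icc_iff, hh]

lemma eq_of_mem_IxM {h y : ℝ} {i j : Fin 2} (hi : y ∈ IxM h i) (hj : y ∈ IxM h j) :
    i = j := by
  fin_cases i <;> fin_cases j <;> simp only [IxM_eq_Ioo, mem_Ioo] at hi hj <;> simp at hi hj ⊢ <;>
    linarith [hi.1, hi.2, hj.1, hj.2]

lemma exists_mem_IxM {h : ℝ} (hh : 0 < h) (j : Fin 2) :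
    ∃ y ∈ IxM h j, y ≠ 0 ∧ y ∈ Ioo (-h) h := by
  fin_cases j
  · exact ⟨-h / 2, by simp [IxM_eq_Ioo]; constructor <;> linarith, by linarith,
      by constructor <;> linarith⟩
  · exact ⟨h / 2, by simp [IxM_eq_Ioo]; linarith, by linarith, by constructor <;> linarith⟩


lemma integral_affine (a b u v : ℝ) :
    ∫ x in a..b, (u + v * x) = u * (b - a) + v * (b ^ 2 - a ^ 2) / 2 := by
  rw [integral_add intervalIntegrable_const (Continuous.intervalIntegrable (by fun_prop) _ _),
    intervalIntegral.integral_const_mul v (fun x => x)]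
  simp [integral_id]
  ring

lemma integral_affine_mul_affine (a b u v A B : ℝ) :
    ∫ x in a..b, (u + v * x) * (A + B * x) =
      u * A * (b - a) + (u * B + v * A) * (b ^ 2 - a ^ 2) / 2 + v * B * (b ^ 3 - a ^ 3) / 3 := by
  have hexpand : ∀ x : ℝ,
      (u + v * x) * (A + B * x) = (u * A + (u * B + v * A) * x) + v * B * x ^ 2 :=
    fun x => by ring
  simp_rw [hexpand]
  rw [integral_add (Continuous.intervalIntegrable (by fun_prop) _ _)
    (Continuous.intervalIntegrable (by fun_prop) _ _), integral_affine,
    intervalIntegral.integral_const_mul (v * B) (fun x => x ^ 2), integral_pow]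
  ring

lemma integral_integral_add {f g : ℝ → ℝ} {a b c d : ℝ}
    (hf : IntervalIntegrable f volume a b) (hg : IntervalIntegrable g volume c d) :
    ∫ x in a..b, ∫ y in c..d, (f x + g y) =
      (d - c) * (∫ x in a..b, f x) + (b - a) * ∫ y in c..d, g y := by
  have hinner : ∀ x, ∫ y in c..d, (f x + g y) = (d - c) * f x + ∫ y in c..d, g y := by
    intro x
    rw [integral_add intervalIntegrable_const hg, intervalIntegral.integral_const, smul_eq_mul]
  simp_rw [hinner]
  rw [integral_add (hf.const_mul _) intervalIntegrable_const, intervalIntegral.integral_const_mul,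
    intervalIntegral.integral_const, smul_eq_mul]

lemma iiM_eq_of_eqOn_add {h : ℝ} (hh : 0 ≤ h) {f : ℝ → ℝ → ℝ}
    (F G : Fin 2 → Fin 2 → ℝ → ℝ)
    (hF : ∀ i j, IntervalIntegrable (F i j) volume (cellLo h i) (cellHi h i))
    (hG : ∀ i j, IntervalIntegrable (G i j) volume (cellLo h j) (cellHi h j))
    (hfg : ∀ i j, ∀ x ∈ IxM h i, ∀ y ∈ IxM h j, f x y = F i j x + G i j y) :
    iiM h f = h * ∑ i, ∑ j, ((∫ x in cellLo h i..cellHi h i, F i j x) +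
      ∫ y in cellLo h j..cellHi h j, G i j y) := by
  simp only [iiM, Finset.mul_sum]
  refine Finset.sum_congr rfl fun i _ => Finset.sum_congr rfl fun j _ => ?_
  change ∫ x in cellLo h i..cellHi h i, ∫ y in cellLo h j..cellHi h j, f x y = _
  rw [integral_congr_Ioo_of_le (cellLo_le_cellHi hh i) fun x hx =>
      integral_congr_Ioo_of_le (cellLo_le_cellHi hh j) fun y hy => hfg i j x hx y hy,
    integral_integral_add (hF i j) (hG i j), cellHi_sub_cellLo, cellHi_sub_cellLo]
  ring

lemma hasDerivAt_quadratic (u v w x : ℝ) :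
    HasDerivAt (fun t => u + v * t + w * t ^ 2) (v + 2 * w * x) x :=
  ((((hasDerivAt_id x).const_mul v).const_add u).add
    ((hasDerivAt_pow 2 x).const_mul w)).congr_deriv (by simp; ring)

lemma Dx_eq_of_eqOn_quadratic {f : ℝ → ℝ → ℝ} {U : Set ℝ} {x y u v w : ℝ} (hU : IsOpen U)
    (hx : x ∈ U) (hf : ∀ t ∈ U, f t y = u + v * t + w * t ^ 2) : Dx f x y = v + 2 * w * x :=
  (Filter.EventuallyEq.deriv_eq (Filter.eventually_of_mem (hU.mem_nhds hx) hf)).trans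
    (hasDerivAt_quadratic u v w x).deriv

lemma Dy_eq_of_eqOn_quadratic {f : ℝ → ℝ → ℝ} {U : Set ℝ} {x y u v w : ℝ} (hU : IsOpen U)
    (hy : y ∈ U) (hf : ∀ t ∈ U, f x t = u + v * t + w * t ^ 2) : Dy f x y = v + 2 * w * y :=
  (Filter.EventuallyEq.deriv_eq (Filter.eventually_of_mem (hU.mem_nhds hy) hf)).trans
    (hasDerivAt_quadratic u v w y).deriv


lemma totalDegree_affine_le (c0 c1 c2 : ℝ) :
    (C c0 + C c1 * X 0 + C c2 * X 1 : MvPolynomial (Fin 2) ℝ).totalDegree ≤ 1 := by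
  have hX : ∀ (c : ℝ) (i : Fin 2), (C c * X i : MvPolynomial (Fin 2) ℝ).totalDegree ≤ 1 :=
    fun c i => (totalDegree_mul _ _).trans (by simp [totalDegree_C, totalDegree_X])
  exact (totalDegree_add _ _).trans (max_le ((totalDegree_add _ _).trans
    (max_le (by simp [totalDegree_C]) (hX _ _))) (hX _ _))

lemma eq_affine_of_totalDegree_le_one {p : MvPolynomial (Fin 2) ℝ} (hp : p.totalDegree ≤ 1) :
    p = C (coeff 0 p) + C (coeff (Finsupp.single 0 1) p) * X 0 +
      C (coeff (Finsupp.single 1 1) p) * X 1 := by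
  have hsupp : ∀ m ∈ p.support,
      m = 0 ∨ m = Finsupp.single 0 1 ∨ m = Finsupp.single 1 1 := by
    intro m hm
    have hdeg : m 0 + m 1 ≤ 1 := by
      have := (le_totalDegree hm).trans hp
      rwa [Finsupp.sum_fintype _ _ (fun _ => rfl), Fin.sum_univ_two] at this
    have hm_eq : m = Finsupp.single 0 (m 0) + Finsupp.single 1 (m 1) := by
      ext k; fin_cases k <;> simp
    rcases (by omega : m 0 = 0 ∧ m 1 = 0 ∨ m 0 = 1 ∧ m 1 = 0 ∨ m 0 = 0 ∧ m 1 = 1) with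
      ⟨h0, h1⟩ | ⟨h0, h1⟩ | ⟨h0, h1⟩ <;> rw [hm_eq, h0, h1] <;> simp
  ext m
  simp only [coeff_add, coeff_C_mul, coeff_C, coeff_X]
  by_cases hm : m ∈ p.support
  · rcases hsupp m hm with rfl | rfl | rfl <;>
      simp [Finsupp.single_eq_single_iff, eq_comm (a := (0 : Fin 2 →₀ ℕ))]
  · rw [notMem_support_iff.mp hm]
    split_ifs <;> simp_all

lemma ev2_of_totalDegree_le_one {p : MvPolynomial (Fin 2) ℝ} (hp : p.totalDegree ≤ 1)
    (x y : ℝ) :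
    ev2 p x y =
      coeff 0 p + coeff (Finsupp.single 0 1) p * x + coeff (Finsupp.single 1 1) p * y := by
  conv_lhs => rw [eq_affine_of_totalDegree_le_one hp]
  simp [ev2]

lemma memH1_one_eval {q : MvPolynomial (Fin 2) ℝ} (hq : memH1 1 q) :
    ∃ c0 c1 c2 : ℝ, ∀ x y, ev2 q x y = c0 + c1 * x + c2 * x ^ 2 := by
  obtain ⟨p, a, b, ⟨hdeg, hcoeff⟩, rfl⟩ := hq
  refine ⟨coeff 0 p, coeff (Finsupp.single 0 1) p, a + b, fun x y => ?_⟩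
  have hp := ev2_of_totalDegree_le_one hdeg x y
  simp only [ev2] at hp ⊢
  simp [hp, hcoeff]
  ring

lemma memH2_one_eval {q : MvPolynomial (Fin 2) ℝ} (hq : memH2 1 q) :
    ∃ c0 c1 c2 : ℝ, ∀ x y, ev2 q x y = c0 + c1 * y + c2 * y ^ 2 := by
  obtain ⟨p, a, b, ⟨hdeg, hcoeff⟩, rfl⟩ := hq
  refine ⟨coeff 0 p, coeff (Finsupp.single 1 1) p, a + b, fun x y => ?_⟩
  have hp := ev2_of_totalDegree_le_one hdeg x y
  simp only [ev2] at hp ⊢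
  simp [hp, hcoeff]
  ring

lemma memS_one_eval {q : MvPolynomial (Fin 2) ℝ} (hq : memS 1 q) :
    ∃ c0 c1 c2 c3 : ℝ, ∀ x y, ev2 q x y = c0 + c1 * x + c2 * y + c3 * (x * y) := by
  obtain ⟨p, a, b, hdeg, rfl⟩ := hq
  refine ⟨coeff 0 p, coeff (Finsupp.single 0 1) p, coeff (Finsupp.single 1 1) p, a + b,
    fun x y => ?_⟩
  have hp := ev2_of_totalDegree_le_one hdeg x y
  simp only [ev2] at hp ⊢
  simp [hp]
  ring

lemma memH1_one_quadratic (c0 c1 c2 : ℝ) : memH1 1 (C c0 + C c1 * X 0 + C c2 * X 0 ^ 2) :=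
  ⟨C c0 + C c1 * X 0 + C 0 * X 1, c2, 0,
    ⟨totalDegree_affine_le _ _ _, by simp [coeff_X, coeff_C, Finsupp.single_eq_single_iff,
      eq_comm (a := (0 : Fin 2 →₀ ℕ))]⟩,
    by simp⟩

lemma memH2_one_quadratic (c0 c1 c2 : ℝ) : memH2 1 (C c0 + C c1 * X 1 + C c2 * X 1 ^ 2) :=
  ⟨C c0 + C 0 * X 0 + C c1 * X 1, c2, 0,
    ⟨totalDegree_affine_le _ _ _, by simp [coeff_X, coeff_C, Finsupp.single_eq_single_iff,
      eq_comm (a := (0 : Fin 2 →₀ ℕ))]⟩,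
    by simp⟩

lemma memS_one_bilinear (c0 c1 c2 c3 : ℝ) :
    memS 1 (C c0 + C c1 * X 0 + C c2 * X 1 + C c3 * X 0 * X 1) :=
  ⟨C c0 + C c1 * X 0 + C c2 * X 1, c3, 0, totalDegree_affine_le _ _ _, by simp⟩

lemma memH1_one_zero : memH1 1 0 := by simpa using memH1_one_quadratic 0 0 0

lemma memH2_one_zero : memH2 1 0 := by simpa using memH2_one_quadratic 0 0 0

lemma memS_one_zero : memS 1 0 := by simpa using memS_one_bilinear 0 0 0 0


section Bubbles

/-- The traces of stresses in `Σ_{1,0}(M)`: `τ₁₁` along horizontal and `τ₂₂` along vertical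
grid lines. -/
def IsQuadraticBubble (h : ℝ) (φ : ℝ → ℝ) (p0 p1 p2 : Fin 2 → ℝ) : Prop :=
  ContinuousOn φ (Icc (-h) h) ∧ φ (-h) = 0 ∧ φ h = 0 ∧
    ∀ k, ∀ s ∈ IxM h k, φ s = p0 k + p1 k * s + p2 k * s ^ 2

variable {h : ℝ} {φ : ℝ → ℝ} {p0 p1 p2 : Fin 2 → ℝ}

lemma IsQuadraticBubble.eqOn_Icc_cell (hh : 0 < h) (hφ : IsQuadraticBubble h φ p0 p1 p2)
    (k : Fin 2) :
    EqOn φ (fun s => p0 k + p1 k * s + p2 k * s ^ 2) (Icc (cellLo h k) (cellHi h k)) :=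
  EqOn.of_subset_closure (hφ.2.2.2 k) (hφ.1.mono (Icc_cell_subset hh.le k))
    (by fun_prop) Ioo_subset_Icc_self
    (by rw [IxM_eq_Ioo, closure_Ioo (by linarith [cellHi_sub_cellLo h k])])

/-- The fundamental theorem of calculus on each cell; the sum telescopes by continuity at `0`. -/
lemma IsQuadraticBubble.sum_integral_deriv (hh : 0 < h) (hφ : IsQuadraticBubble h φ p0 p1 p2) :
    ∑ k, ∫ s in cellLo h k..cellHi h k, (p1 k + 2 * p2 k * s) = 0 := by
  have e0 := hφ.eqOn_Icc_cell hh 0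
  have e1 := hφ.eqOn_Icc_cell hh 1
  simp only [cellLo_zero, cellHi_zero, cellLo_one, cellHi_one] at e0 e1
  have hl := e0 (left_mem_Icc.mpr (by linarith))
  have hc0 := e0 (right_mem_Icc.mpr (by linarith))
  have hc1 := e1 (left_mem_Icc.mpr (by linarith))
  have hr := e1 (right_mem_Icc.mpr (by linarith))
  rw [Fin.sum_univ_two, integral_affine, integral_affine]
  simp only [cellLo_zero, cellHi_zero, cellLo_one, cellHi_one]
  linear_combination hl - hc0 + hc1 - hr - hφ.2.1 + hφ.2.2.1

lemma isQuadraticBubble_left (hh : 0 < h) :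
    IsQuadraticBubble h (fun s => min s 0 * (min s 0 + h)) 0 ![h, 0] ![1, 0] := by
  refine ⟨by fun_prop, by simp [hh.le], by simp [hh.le], fun k s hs => ?_⟩
  fin_cases k <;> simp only [IxM_eq_Ioo, mem_Ioo] at hs <;> simp at hs
  · simp [min_eq_left hs.2.le]; ring
  · simp [hs.1.le]

lemma isQuadraticBubble_right (hh : 0 < h) :
    IsQuadraticBubble h (fun s => max s 0 * (max s 0 - h)) 0 ![0, -h] ![0, 1] := by
  refine ⟨by fun_prop, by simp [hh.le], by simp [hh.le], fun k s hs => ?_⟩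
  fin_cases k <;> simp only [IxM_eq_Ioo, mem_Ioo] at hs <;> simp at hs
  · simp [hs.2.le]
  · simp [max_eq_left hs.1.le]; ring

lemma isQuadraticBubble_tent (hh : 0 < h) :
    IsQuadraticBubble h (fun s => h - |s|) ![h, h] ![1, -1] 0 := by
  refine ⟨by fun_prop, by simp [abs_of_pos hh], by simp [abs_of_pos hh], fun k s hs => ?_⟩
  fin_cases k <;> simp only [IxM_eq_Ioo, mem_Ioo] at hs <;> simp at hs
  · simp [abs_of_neg hs.2]
  · simp [abs_of_pos hs.1]; ring

lemma affine_eq_const_of_forall_bubble (hh : 0 < h) {a b : Fin 2 → ℝ}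
    (H : ∀ φ p0 p1 p2, IsQuadraticBubble h φ p0 p1 p2 →
      ∑ k, ∫ s in cellLo h k..cellHi h k, (p1 k + 2 * p2 k * s) * (a k + b k * s) = 0)
    (k : Fin 2) (s : ℝ) : a k + b k * s = a 0 := by
  have hL := H _ _ _ _ (isQuadraticBubble_left hh)
  have hR := H _ _ _ _ (isQuadraticBubble_right hh)
  have hT := H _ _ _ _ (isQuadraticBubble_tent hh)
  simp only [Fin.sum_univ_two, integral_affine_mul_affine, cellLo_zero, cellHi_zero, cellLo_one,
    cellHi_one, Matrix.cons_val_zero, Matrix.cons_val_one, Pi.zero_apply] at hL hR hT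
  have hh3 : h ^ 3 / 6 ≠ 0 := by positivity
  have hb0 : b 0 = 0 :=
    (mul_eq_zero.mp (by linear_combination hL : h ^ 3 / 6 * b 0 = 0)).resolve_left hh3
  have hb1 : b 1 = 0 :=
    (mul_eq_zero.mp (by linear_combination hR : h ^ 3 / 6 * b 1 = 0)).resolve_left hh3
  have ha : a 1 = a 0 := by
    have : h * (a 0 - a 1) = 0 := by linear_combination hT + h ^ 2 / 2 * hb0 + h ^ 2 / 2 * hb1
    linarith [(mul_eq_zero.mp this).resolve_left hh.ne']
  fin_cases k <;> simp [hb0, hb1, ha]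

end Bubbles

/-- The defining condition of the kernel `N_M`; membership in `V₁(M)` is kept separate. -/
def InMacroKernel (h : ℝ) (v1 v2 : ℝ → ℝ → ℝ) : Prop :=
  ∀ t11 t12 t22 : ℝ → ℝ → ℝ, macroSigma0 1 h t11 t12 t22 →
    iiM h (fun x y => (Dx t11 x y + Dy t12 x y) * v1 x y + (Dx t12 x y + Dy t22 x y) * v2 x y) = 0

section Forward

open scoped Classical

variable {h : ℝ} {v1 v2 : ℝ → ℝ → ℝ} {φ : ℝ → ℝ} {p0 p1 p2 : Fin 2 → ℝ}

lemma macroSigma0_row (j : Fin 2) (hφ : IsQuadraticBubble h φ p0 p1 p2) :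
    macroSigma0 1 h (fun x y => if y ∈ IxM h j then φ x else 0) (fun _ _ => 0)
      (fun _ _ => 0) := by
  obtain ⟨hc, hl, hr, hq⟩ := hφ
  refine ⟨fun i j' => ?_, fun y _ _ => ?_, fun _ _ _ => continuousOn_const, continuousOn_const,
    fun y _ _ => ?_, fun _ _ _ => by simp, fun _ _ => rfl⟩
  · by_cases hj : j' = j
    · subst hj
      refine ⟨C (p0 i) + C (p1 i) * X 0 + C (p2 i) * X 0 ^ 2, 0, 0, memH1_one_quadratic _ _ _,
        memH2_one_zero, memS_one_zero, fun x hx y hy => ?_⟩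
      simp [ev2, hy, hq i x hx]
    · refine ⟨0, 0, 0, memH1_one_zero, memH2_one_zero, memS_one_zero, fun x _ y hy => ?_⟩
      have hy' : y ∉ IxM h j := fun hy' => hj (eq_of_mem_IxM hy hy')
      simp [ev2, hy']
  · by_cases hy : y ∈ IxM h j
    · simpa [hy] using hc
    · simpa [hy] using continuousOn_const
  · by_cases hy : y ∈ IxM h j <;> simp [hy, hl, hr]

lemma macroSigma0_col (i : Fin 2) (hφ : IsQuadraticBubble h φ p0 p1 p2) :
    macroSigma0 1 h (fun _ _ => 0) (fun _ _ => 0)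
      (fun x y => if x ∈ IxM h i then φ y else 0) := by
  obtain ⟨hc, hl, hr, hq⟩ := hφ
  refine ⟨fun i' j => ?_, fun _ _ _ => continuousOn_const, fun x _ _ => ?_, continuousOn_const,
    fun _ _ _ => by simp, fun x _ _ => ?_, fun _ _ => rfl⟩
  · by_cases hi : i' = i
    · subst hi
      refine ⟨0, C (p0 j) + C (p1 j) * X 1 + C (p2 j) * X 1 ^ 2, 0, memH1_one_zero,
        memH2_one_quadratic _ _ _, memS_one_zero, fun x hx y hy => ?_⟩
      simp [ev2, hx, hq j y hy]
    · refine ⟨0, 0, 0, memH1_one_zero, memH2_one_zero, memS_one_zero, fun x hx y _ => ?_⟩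
      have hx' : x ∉ IxM h i := fun hx' => hi (eq_of_mem_IxM hx hx')
      simp [ev2, hx']
  · by_cases hx : x ∈ IxM h i
    · simpa [hx] using hc
    · simpa [hx] using continuousOn_const
  · by_cases hx : x ∈ IxM h i <;> simp [hx, hl, hr]

lemma InMacroKernel.sum_integral_row (hK : InMacroKernel h v1 v2) (hh : 0 < h) (j : Fin 2)
    {a b : Fin 2 → ℝ} (hv1 : ∀ i, ∀ x ∈ IxM h i, ∀ y ∈ IxM h j, v1 x y = a i + b i * x)
    (hφ : IsQuadraticBubble h φ p0 p1 p2) :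
    ∑ k, ∫ s in cellLo h k..cellHi h k, (p1 k + 2 * p2 k * s) * (a k + b k * s) = 0 := by
  have hK' := hK _ _ _ (macroSigma0_row j hφ)
  rw [iiM_eq_of_eqOn_add hh.le
    (fun i j' x => (if j' = j then 1 else 0) * ((p1 i + 2 * p2 i * x) * (a i + b i * x)))
    (fun _ _ _ => 0) (fun _ _ => Continuous.intervalIntegrable (by fun_prop) _ _)
    (fun _ _ => intervalIntegrable_const)] at hK'
  · simp only [intervalIntegral.integral_const_mul, intervalIntegral.integral_zero,
      add_zero] at hK'
    simp only [ite_mul, one_mul, zero_mul, Finset.sum_ite_eq', Finset.mem_univ, if_true] at hK'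
    exact (mul_eq_zero.mp hK').resolve_left hh.ne'
  · intro i j' x hx y hy
    by_cases hj : j' = j
    · subst hj
      rw [Dx_eq_of_eqOn_quadratic (f := fun x y => if y ∈ IxM h j' then φ x else 0)
        (u := p0 i) (v := p1 i) (w := p2 i) isOpen_Ioo hx
        (fun t ht => by simp [hy, hφ.2.2.2 i t ht]),
        hv1 i x hx y hy]
      simp [Dx, Dy]
    · have hy' : y ∉ IxM h j := fun hy' => hj (eq_of_mem_IxM hy hy')
      simp [Dx, Dy, hj, hy']

lemma InMacroKernel.sum_integral_col (hK : InMacroKernel h v1 v2) (hh : 0 < h) (i : Fin 2)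
    {c d : Fin 2 → ℝ} (hv2 : ∀ j, ∀ x ∈ IxM h i, ∀ y ∈ IxM h j, v2 x y = c j + d j * y)
    (hφ : IsQuadraticBubble h φ p0 p1 p2) :
    ∑ k, ∫ s in cellLo h k..cellHi h k, (p1 k + 2 * p2 k * s) * (c k + d k * s) = 0 := by
  have hK' := hK _ _ _ (macroSigma0_col i hφ)
  rw [iiM_eq_of_eqOn_add hh.le (fun _ _ _ => 0)
    (fun i' j y => (if i' = i then 1 else 0) * ((p1 j + 2 * p2 j * y) * (c j + d j * y)))
    (fun _ _ => intervalIntegrable_const)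
    (fun _ _ => Continuous.intervalIntegrable (by fun_prop) _ _)] at hK'
  · simp only [intervalIntegral.integral_const_mul, intervalIntegral.integral_zero, zero_add,
      ← Finset.mul_sum] at hK'
    simp only [ite_mul, one_mul, zero_mul, Finset.sum_ite_eq', Finset.mem_univ, if_true] at hK'
    exact (mul_eq_zero.mp hK').resolve_left hh.ne'
  · intro i' j x hx y hy
    by_cases hi : i' = i
    · subst hi
      rw [Dy_eq_of_eqOn_quadratic (f := fun x y => if x ∈ IxM h i' then φ y else 0)
        (u := p0 j) (v := p1 j) (w := p2 j) isOpen_Ioo hy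
        (fun t ht => by simp [hx, hφ.2.2.2 j t ht]), hv2 j x hx y hy]
      simp [Dx, Dy]
    · have hx' : x ∉ IxM h i := fun hx' => hi (eq_of_mem_IxM hx hx')
      simp [Dx, Dy, hi, hx']

lemma InMacroKernel.eq_const_row (hK : InMacroKernel h v1 v2) (hh : 0 < h) (j : Fin 2)
    {a b : Fin 2 → ℝ} (hv1 : ∀ i, ∀ x ∈ IxM h i, ∀ y ∈ IxM h j, v1 x y = a i + b i * x) :
    ∀ i, ∀ x ∈ IxM h i, ∀ y ∈ IxM h j, v1 x y = a 0 := fun i x hx y hy => by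
  rw [hv1 i x hx y hy, affine_eq_const_of_forall_bubble hh
    (fun _ _ _ _ hφ => hK.sum_integral_row hh j hv1 hφ)]

lemma InMacroKernel.eq_const_col (hK : InMacroKernel h v1 v2) (hh : 0 < h) (i : Fin 2)
    {c d : Fin 2 → ℝ} (hv2 : ∀ j, ∀ x ∈ IxM h i, ∀ y ∈ IxM h j, v2 x y = c j + d j * y) :
    ∀ j, ∀ x ∈ IxM h i, ∀ y ∈ IxM h j, v2 x y = c 0 := fun j x hx y hy => by
  rw [hv2 j x hx y hy, affine_eq_const_of_forall_bubble hh
    (fun _ _ _ _ hφ => hK.sum_integral_col hh i hv2 hφ)]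

lemma abs_sub_eq_of_mem_IxM {h x : ℝ} {i : Fin 2} (hx : x ∈ IxM h i) :
    h - |x| = h + eps2 i * x := by
  fin_cases i <;> simp only [IxM_eq_Ioo, mem_Ioo] at hx <;> simp at hx
  · simp [abs_of_neg hx.2]
  · simp [abs_of_pos hx.1]; ring

lemma macroSigma0_tent (hh : 0 < h) :
    macroSigma0 1 h (fun _ _ => 0) (fun x y => (h - |x|) * (h - |y|)) (fun _ _ => 0) := by
  refine ⟨fun i j => ?_, fun _ _ _ => continuousOn_const, fun _ _ _ => continuousOn_const,
    by fun_prop, fun _ _ _ => by simp, fun _ _ _ => by simp, fun z hz => ?_⟩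
  · refine ⟨0, 0, C (h * h) + C (h * eps2 i) * X 0 + C (h * eps2 j) * X 1 +
      C (eps2 i * eps2 j) * X 0 * X 1, memH1_one_zero, memH2_one_zero, memS_one_bilinear _ _ _ _,
      fun x hx y hy => ?_⟩
    simp only [ev2, map_zero, true_and]
    simp [abs_sub_eq_of_mem_IxM hx, abs_sub_eq_of_mem_IxM hy]
    ring
  · rw [frontier_prod_eq, closure_Ioo (by linarith), frontier_Ioo (by linarith)] at hz
    simp only [mem_union, mem_prod, mem_insert_iff, mem_singleton_iff] at hz
    rcases hz with ⟨_, hz | hz⟩ | ⟨hz | hz, _⟩ <;> simp [hz, abs_of_pos hh]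

lemma InMacroKernel.shear (hK : InMacroKernel h v1 v2) (hh : 0 < h) {A C : Fin 2 → ℝ}
    (hv1 : ∀ i j, ∀ x ∈ IxM h i, ∀ y ∈ IxM h j, v1 x y = A j)
    (hv2 : ∀ i j, ∀ x ∈ IxM h i, ∀ y ∈ IxM h j, v2 x y = C i) :
    A 0 - A 1 + (C 0 - C 1) = 0 := by
  have hK' := hK _ _ _ (macroSigma0_tent hh)
  rw [iiM_eq_of_eqOn_add hh.le (fun i j x => eps2 j * A j * (h + eps2 i * x))
    (fun i j y => eps2 i * C i * (h + eps2 j * y))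
    (fun _ _ => Continuous.intervalIntegrable (by fun_prop) _ _)
    (fun _ _ => Continuous.intervalIntegrable (by fun_prop) _ _)] at hK'
  · simp only [intervalIntegral.integral_const_mul, integral_affine, Fin.sum_univ_two,
      cellLo_zero, cellHi_zero, cellLo_one, cellHi_one] at hK'
    have hsum := (mul_eq_zero.mp hK').resolve_left hh.ne'
    norm_num at hsum
    exact (mul_eq_zero.mp (by linear_combination hsum : h ^ 2 * (A 0 - A 1 + (C 0 - C 1)) = 0)
      ).resolve_left (by positivity)
  · intro i j x hx y hy
    rw [Dx_eq_of_eqOn_quadratic (f := fun x y => (h - |x|) * (h - |y|)) (u := h * (h - |y|))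
        (v := eps2 i * (h - |y|)) (w := 0) isOpen_Ioo hx
        (fun t ht => by rw [abs_sub_eq_of_mem_IxM ht]; ring),
      Dy_eq_of_eqOn_quadratic (f := fun x y => (h - |x|) * (h - |y|)) (u := h * (h - |x|))
        (v := eps2 j * (h - |x|)) (w := 0) isOpen_Ioo hy
        (fun t ht => by rw [abs_sub_eq_of_mem_IxM ht]; ring),
      hv1 i j x hx y hy, hv2 i j x hx y hy, abs_sub_eq_of_mem_IxM hx, abs_sub_eq_of_mem_IxM hy]
    simp [Dx, Dy]
    ring

theorem InMacroKernel.exists_eq_const_add_eps (hK : InMacroKernel h v1 v2) (hh : 0 < h)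
    (hv : ∀ i j : Fin 2, ∃ a b c d : ℝ, ∀ x ∈ IxM h i, ∀ y ∈ IxM h j,
      v1 x y = a + b * x ∧ v2 x y = c + d * y) :
    ∃ α β γ : ℝ, ∀ i j : Fin 2, ∀ x ∈ IxM h i, ∀ y ∈ IxM h j,
      v1 x y = α + γ * eps1 j ∧ v2 x y = β + γ * eps2 i := by
  choose a b c d hv using hv
  have hrow := fun j => hK.eq_const_row hh j (a := (a · j)) (b := (b · j))
    fun i x hx y hy => (hv i j x hx y hy).1
  have hcol := fun i => hK.eq_const_col hh i (c := c i) (d := d i)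
    fun j x hx y hy => (hv i j x hx y hy).2
  have hshear := hK.shear hh (fun i j => hrow j i) (fun i j => hcol i j)
  refine ⟨(a 0 0 + a 0 1) / 2, (c 0 0 + c 1 0) / 2, (a 0 1 - a 0 0) / 2,
    fun i j x hx y hy => ⟨?_, ?_⟩⟩
  · rw [hrow j i x hx y hy]
    fin_cases j <;> simp <;> ring
  · rw [hcol i j x hx y hy]
    fin_cases i <;> simp <;> linarith

end Forward

section Backward

variable {h : ℝ}

lemma eqOn_Icc_cell_of_continuousOn {t : ℝ → ℝ → ℝ} {g : ℝ → ℝ → ℝ} (hh : 0 < h)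
    (hc : ContinuousOn (fun z : ℝ × ℝ => t z.1 z.2) (Icc (-h) h ×ˢ Icc (-h) h))
    (hg : Continuous fun z : ℝ × ℝ => g z.1 z.2) {i j : Fin 2}
    (htg : ∀ x ∈ IxM h i, ∀ y ∈ IxM h j, t x y = g x y) :
    ∀ x ∈ Icc (cellLo h i) (cellHi h i), ∀ y ∈ Icc (cellLo h j) (cellHi h j),
      t x y = g x y := by
  have hne : ∀ k, cellLo h k ≠ cellHi h k := fun k => by linarith [cellHi_sub_cellLo h k]
  intro x hx y hy
  exact EqOn.of_subset_closure (f := fun z : ℝ × ℝ => t z.1 z.2)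
    (fun z hz => htg _ hz.1 _ hz.2)
    (hc.mono (prod_mono (Icc_cell_subset hh.le i) (Icc_cell_subset hh.le j))) hg.continuousOn
    (prod_mono Ioo_subset_Icc_self Ioo_subset_Icc_self)
    (by rw [closure_prod_eq, closure_Ioo (hne i), closure_Ioo (hne j)])
    (mk_mem_prod hx hy)

/-- The shear stress enters only through its value at the centre: the cell integrals of
`∂ₓτ₁₂` and `∂ᵧτ₁₂` are trapezoidal sums of corner values, and all other grid values lie on the
boundary. -/
lemma sum_integral_shear (hh : 0 < h) {t12 : ℝ → ℝ → ℝ}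
    (hc : ContinuousOn (fun z : ℝ × ℝ => t12 z.1 z.2) (Icc (-h) h ×ˢ Icc (-h) h))
    (hb : ∀ z ∈ frontier (Ioo (-h) h ×ˢ Ioo (-h) h), t12 z.1 z.2 = 0)
    {s0 s1 s2 s3 : Fin 2 → Fin 2 → ℝ}
    (hs : ∀ i j, ∀ x ∈ IxM h i, ∀ y ∈ IxM h j,
      t12 x y = s0 i j + s1 i j * x + s2 i j * y + s3 i j * (x * y)) :
    (∀ j, ∑ i, ∫ x in cellLo h i..cellHi h i, (s2 i j + s3 i j * x) = eps2 j * t12 0 0) ∧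
      ∀ i, ∑ j, ∫ y in cellLo h j..cellHi h j, (s1 i j + s3 i j * y) = eps2 i * t12 0 0 := by
  have hcorner : ∀ i j,
      ∀ x ∈ Icc (cellLo h i) (cellHi h i), ∀ y ∈ Icc (cellLo h j) (cellHi h j),
      t12 x y = s0 i j + s1 i j * x + s2 i j * y + s3 i j * (x * y) := fun i j =>
    eqOn_Icc_cell_of_continuousOn hh hc (by fun_prop) (hs i j)
  have hlo := fun k => left_mem_Icc.mpr (cellLo_le_cellHi hh.le k)
  have hhi := fun k => right_mem_Icc.mpr (cellLo_le_cellHi hh.le k)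
  have hx_cell : ∀ i j, ∫ x in cellLo h i..cellHi h i, (s2 i j + s3 i j * x) =
      (t12 (cellLo h i) (cellHi h j) + t12 (cellHi h i) (cellHi h j)
        - t12 (cellLo h i) (cellLo h j) - t12 (cellHi h i) (cellLo h j)) / 2 := by
    intro i j
    rw [integral_affine, hcorner i j _ (hlo i) _ (hhi j), hcorner i j _ (hhi i) _ (hhi j),
      hcorner i j _ (hlo i) _ (hlo j), hcorner i j _ (hhi i) _ (hlo j)]
    linear_combination (s2 i j + s3 i j * (cellHi h i + cellLo h i) / 2) *
      (cellHi_sub_cellLo h i - cellHi_sub_cellLo h j)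
  have hy_cell : ∀ i j, ∫ y in cellLo h j..cellHi h j, (s1 i j + s3 i j * y) =
      (t12 (cellHi h i) (cellLo h j) + t12 (cellHi h i) (cellHi h j)
        - t12 (cellLo h i) (cellLo h j) - t12 (cellLo h i) (cellHi h j)) / 2 := by
    intro i j
    rw [integral_affine, hcorner i j _ (hlo i) _ (hhi j), hcorner i j _ (hhi i) _ (hhi j),
      hcorner i j _ (hlo i) _ (hlo j), hcorner i j _ (hhi i) _ (hlo j)]
    linear_combination (s1 i j + s3 i j * (cellHi h j + cellLo h j) / 2) *
      (cellHi_sub_cellLo h j - cellHi_sub_cellLo h i)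
  have hzero : ∀ x ∈ Icc (-h) h,
      t12 x (-h) = 0 ∧ t12 x h = 0 ∧ t12 (-h) x = 0 ∧ t12 h x = 0 := by
    intro x hx
    have hcl : x ∈ closure (Ioo (-h) h) := by rwa [closure_Ioo (by linarith)]
    refine ⟨hb (x, -h) ?_, hb (x, h) ?_, hb (-h, x) ?_, hb (h, x) ?_⟩ <;>
      simp [frontier_prod_eq, frontier_Ioo (show -h < h by linarith), hcl]
  obtain ⟨z1, z2, -, z3⟩ := hzero (-h) (left_mem_Icc.mpr (by linarith))
  obtain ⟨z4, z5, z6, z7⟩ := hzero 0 ⟨by linarith, by linarith⟩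
  obtain ⟨-, z8, -, -⟩ := hzero h (right_mem_Icc.mpr (by linarith))
  refine ⟨fun j => ?_, fun i => ?_⟩ <;> [fin_cases j; fin_cases i] <;>
    simp [Fin.sum_univ_two, hx_cell, hy_cell, z1, z2, z3, z4, z5, z6, z7, z8]

lemma macroSigma0_one_cellwise {t11 t12 t22 : ℝ → ℝ → ℝ} (hσ : macroSigma0 1 h t11 t12 t22) :
    ∃ p0 p1 p2 e0 e1 e2 s0 s1 s2 s3 : Fin 2 → Fin 2 → ℝ, ∀ i j, ∀ x ∈ IxM h i, ∀ y ∈ IxM h j,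
      t11 x y = p0 i j + p1 i j * x + p2 i j * x ^ 2 ∧
      t22 x y = e0 i j + e1 i j * y + e2 i j * y ^ 2 ∧
      t12 x y = s0 i j + s1 i j * x + s2 i j * y + s3 i j * (x * y) := by
  choose q1 q2 q12 hq1 hq2 hq12 hq using hσ.1
  choose p0 p1 p2 hp using fun i j => memH1_one_eval (hq1 i j)
  choose e0 e1 e2 he using fun i j => memH2_one_eval (hq2 i j)
  choose s0 s1 s2 s3 hs using fun i j => memS_one_eval (hq12 i j)
  refine ⟨p0, p1, p2, e0, e1, e2, s0, s1, s2, s3, fun i j x hx y hy => ?_⟩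
  obtain ⟨h11, h22, h12⟩ := hq i j x hx y hy
  exact ⟨h11.trans (hp i j x y), h22.trans (he i j x y), h12.trans (hs i j x y)⟩

lemma inMacroKernel_of_eq_const_add_eps (hh : 0 < h) {v1 v2 : ℝ → ℝ → ℝ} {α β γ : ℝ}
    (hv : ∀ i j : Fin 2, ∀ x ∈ IxM h i, ∀ y ∈ IxM h j,
      v1 x y = α + γ * eps1 j ∧ v2 x y = β + γ * eps2 i) :
    InMacroKernel h v1 v2 := by
  intro t11 t12 t22 hσ
  obtain ⟨p0, p1, p2, e0, e1, e2, s0, s1, s2, s3, hcell⟩ := macroSigma0_one_cellwise hσ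
  obtain ⟨-, hc11, hc22, hc12, hb11, hb22, hb12⟩ := hσ
  have hrow : ∀ j, ∑ i, ∫ x in cellLo h i..cellHi h i, (p1 i j + 2 * p2 i j * x) = 0 := by
    intro j
    obtain ⟨y, hy, hy0, hyM⟩ := exists_mem_IxM hh j
    exact IsQuadraticBubble.sum_integral_deriv hh ⟨hc11 y hyM hy0, (hb11 y hyM hy0).1,
      (hb11 y hyM hy0).2, fun i x hx => (hcell i j x hx y hy).1⟩
  have hcol : ∀ i, ∑ j, ∫ y in cellLo h j..cellHi h j, (e1 i j + 2 * e2 i j * y) = 0 := by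
    intro i
    obtain ⟨x, hx, hx0, hxM⟩ := exists_mem_IxM hh i
    exact IsQuadraticBubble.sum_integral_deriv hh ⟨hc22 x hxM hx0, (hb22 x hxM hx0).1,
      (hb22 x hxM hx0).2, fun j y hy => (hcell i j x hx y hy).2.1⟩
  obtain ⟨hshear_row, hshear_col⟩ :=
    sum_integral_shear hh hc12 hb12 fun i j x hx y hy => (hcell i j x hx y hy).2.2
  rw [iiM_eq_of_eqOn_add hh.le
    (fun i j x => (p1 i j + s2 i j + (2 * p2 i j + s3 i j) * x) * (α + γ * eps1 j))
    (fun i j y => (s1 i j + e1 i j + (s3 i j + 2 * e2 i j) * y) * (β + γ * eps2 i))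
    (fun _ _ => Continuous.intervalIntegrable (by fun_prop) _ _)
    (fun _ _ => Continuous.intervalIntegrable (by fun_prop) _ _)]
  · have r0 := hrow 0; have r1 := hrow 1; have c0 := hcol 0; have c1 := hcol 1
    have sr0 := hshear_row 0; have sr1 := hshear_row 1
    have sc0 := hshear_col 0; have sc1 := hshear_col 1
    simp only [intervalIntegral.integral_mul_const, integral_affine, Fin.sum_univ_two, cellLo_zero,
      cellHi_zero, cellLo_one, cellHi_one, eps1_zero, eps1_one, eps2_zero, eps2_one]
      at r0 r1 c0 c1 sr0 sr1 sc0 sc1 ⊢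
    linear_combination h * ((α - γ) * (r0 + sr0) + (α + γ) * (r1 + sr1) +
      (β + γ) * (sc0 + c0) + (β - γ) * (sc1 + c1))
  · intro i j x hx y hy
    rw [Dx_eq_of_eqOn_quadratic (f := t11) isOpen_Ioo hx fun t ht => (hcell i j t ht y hy).1,
      Dy_eq_of_eqOn_quadratic (f := t22) isOpen_Ioo hy fun t ht => (hcell i j x hx t ht).2.1,
      Dx_eq_of_eqOn_quadratic (f := t12) (u := s0 i j + s2 i j * y) (v := s1 i j + s3 i j * y)
        (w := 0) isOpen_Ioo hx fun t ht => by rw [(hcell i j t ht y hy).2.2]; ring,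
      Dy_eq_of_eqOn_quadratic (f := t12) (u := s0 i j + s1 i j * x) (v := s2 i j + s3 i j * x)
        (w := 0) isOpen_Ioo hy fun t ht => by rw [(hcell i j x hx t ht).2.2]; ring,
      (hv i j x hx y hy).1, (hv i j x hx y hy).2]
    ring

end Backward

theorem lowest_order_macro_kernel (h : ℝ) (hh : 0 < h) (v1 v2 : ℝ → ℝ → ℝ)
    (hv : ∀ i j : Fin 2, ∃ a b c d : ℝ, ∀ x ∈ IxM h i, ∀ y ∈ IxM h j,
      v1 x y = a + b * x ∧ v2 x y = c + d * y) :
    (∀ t11 t12 t22 : ℝ → ℝ → ℝ, macroSigma0 1 h t11 t12 t22 →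
      iiM h (fun x y => (Dx t11 x y + Dy t12 x y) * v1 x y +
        (Dx t12 x y + Dy t22 x y) * v2 x y) = 0) ↔
    ∃ α β γ : ℝ, ∀ i j : Fin 2, ∀ x ∈ IxM h i, ∀ y ∈ IxM h j,
      v1 x y = α + γ * eps1 j ∧ v2 x y = β + γ * eps2 i :=
  ⟨fun hK => InMacroKernel.exists_eq_const_add_eps hK hh hv,
    fun ⟨_, _, _, hR⟩ => inMacroKernel_of_eq_const_add_eps hh hR⟩
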